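/- Under the coordinate change (x₁, y₁, z₁, w₁) = (1/x, −x(xy + α₂), z, w), the Hamiltonian vector field of H = −2x²y + 2y² − 2ty − 2α₂x + z²w + w² + tw + α₃z − 3yw transforms into a Hamiltonian vector field with Hamiltonian that is a polynomial in x₁, y₁, z₁, w₁, t. -/
import Mathlib

/-- The Hamiltonian H = −2x²y + 2y² − 2ty − 2α₂x + z²w + w² + tw + α₃z − 3yw. -/
noncomputable def Hfun (α₂ α₃ x y z w t : ℂ) : ℂ :=
  -2 * x ^ 2 * y + 2 * y ^ 2 - 2 * t * y - 2 * α₂ * x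
    + z ^ 2 * w + w ^ 2 + t * w + α₃ * z - 3 * y * w

open MvPolynomial in
/-- in the coordinates (x₁,y₁,z₁,w₁) = (1/x, −x(xy+α₂), z, w)
the transformed Hamiltonian is a polynomial in x₁, y₁, z₁, w₁, t. -/
theorem H_polynomial_in_chart_one (α₂ α₃ : ℂ) :
    ∃ H₁ : MvPolynomial (Fin 5) ℂ, ∀ x y z w t : ℂ, x ≠ 0 →
      MvPolynomial.eval (![1 / x, -x * (x * y + α₂), z, w, t]) H₁ =
        Hfun α₂ α₃ x y z w t := by
  refine ⟨2 * X 1 + 2 * (-(X 0)^2 * X 1 - C α₂ * X 0)^2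
      - 2 * X 4 * (-(X 0)^2 * X 1 - C α₂ * X 0)
      + (X 2)^2 * X 3 + (X 3)^2 + X 4 * X 3 + C α₃ * X 2
      - 3 * (-(X 0)^2 * X 1 - C α₂ * X 0) * X 3, ?_⟩
  intro x y z w t hx
  simp only [map_add, map_sub, map_mul, map_pow, map_neg, map_ofNat, eval_C, eval_X]
  simp only [Matrix.cons_val_zero, Matrix.cons_val_one, Matrix.head_cons,
    Matrix.cons_val_two, Matrix.tail_cons, Matrix.cons_val_three, Matrix.cons_val_four]
  have hy : -(1 / x) ^ 2 * (-x * (x * y + α₂)) - α₂ * (1 / x) = y := by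
    field_simp; ring
  rw [hy]
  unfold Hfun
  ring
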